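/- If t ∈ H_0(K̃_b) has persistence interval (b, d) in H_0(K̃_•) with d ≤ n finite, then there exists a 0-chain c of vertices of K_b, at least one of which lies in V_b ∖ V_{b−1}, such that the class t equals the class of c in H_0(K̃_b), and such that the class s = ⟨c⟩ ∈ H_0(K_b) satisfies θ_{0,b}(s) = t and has persistence interval (b, d) in H_0(K_•). -/

import Mathlib

/-!
Attaching the stars makes every `θ_i` surjective for `i ≥ 1`, since each cone point `z_j` is
joined by an edge to a vertex of `V_{1,j}`. Since `K̃_d = K_d ∪ K̃_1` with `K_d ∩ K̃_1 = K_1`,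
Mayer–Vietoris in degree `0` shows that every class killed by `θ_d` is `φ_{1,d}(g)` for some `g`
killed by `θ_1`. Now write `t = θ_b(s₀)` and `ψ_{b,d}(t) = ψ_{b-1,d}(θ_{b-1} u)`: then
`φ_{b,d}(s₀) - φ_{b-1,d}(u) = φ_{1,d}(g)` with `θ_1 g = 0`, so `s = s₀ - φ_{1,b}(g)` still maps to
`t` and dies at `d`. By naturality of `θ`, `s` is born at `b` and survives until `d` because `t`
does; being born at `b`, every chain representing `s` uses a vertex outside `V_{b-1}`.
-/

/-- An abstract simplicial complex on a vertex type `α`: a collection of nonempty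
finite subsets of `α` closed under passing to nonempty subsets. -/
structure AbsSC (α : Type) where
  faces : Set (Finset α)
  not_empty_mem : ∅ ∉ faces
  down_closed : ∀ {s t : Finset α}, s ∈ faces → t ⊆ s → t.Nonempty → t ∈ faces

namespace AbsSC

variable {α : Type}

/-- The vertex set of an abstract simplicial complex. -/
def vertexSet (K : AbsSC α) : Set α := {v | {v} ∈ K.faces}

/-- The type of `q`-simplices (faces with `q+1` vertices). -/
def simplices (K : AbsSC α) (q : ℕ) : Type :=
  {s : Finset α // s ∈ K.faces ∧ s.card = q + 1}

/-- The space of `q`-chains over `ℤ/2`: formal sums of `q`-simplices. -/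
abbrev Chain (K : AbsSC α) (q : ℕ) : Type := K.simplices q →₀ ZMod 2

/-- The sum of the `q`-dimensional faces of a `(q+1)`-simplex. -/
noncomputable def faceChain (K : AbsSC α) (q : ℕ) (s : K.simplices (q + 1)) : K.Chain q :=
  ∑ t ∈ (s.1.powersetCard (q + 1)).attach,
    Finsupp.single
      ⟨t.1, by
        obtain ⟨hsub, hcard⟩ := Finset.mem_powersetCard.mp t.2
        refine ⟨K.down_closed s.2.1 hsub ?_, hcard⟩
        rw [← Finset.card_pos, hcard]
        omega⟩
      (1 : ZMod 2)

/-- The boundary map `∂_{q+1} : C_{q+1}(K) → C_q(K)`, sending each `(q+1)`-simplex to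
the sum of its `q`-dimensional faces. -/
noncomputable def boundary (K : AbsSC α) (q : ℕ) :
    K.Chain (q + 1) →ₗ[ZMod 2] K.Chain q :=
  Finsupp.lsum (ZMod 2) fun s => LinearMap.toSpanSingleton (ZMod 2) (K.Chain q) (K.faceChain q s)

/-- The cycle subspace: `ker ∂_q` (all of `C_0` in degree `0`). -/
noncomputable def cycles (K : AbsSC α) : (q : ℕ) → Submodule (ZMod 2) (K.Chain q)
  | 0 => ⊤
  | q + 1 => LinearMap.ker (K.boundary q)

/-- The boundaries, viewed as a submodule of the cycles. -/
noncomputable def boundariesIn (K : AbsSC α) (q : ℕ) :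
    Submodule (ZMod 2) (K.cycles q) :=
  Submodule.comap (K.cycles q).subtype (LinearMap.range (K.boundary q))

/-- The `q`-th simplicial homology over `ℤ/2`: `H_q(K) = ker ∂_q / im ∂_{q+1}`. -/
def Homology (K : AbsSC α) (q : ℕ) : Type :=
  (K.cycles q) ⧸ (K.boundariesIn q)

noncomputable instance (K : AbsSC α) (q : ℕ) : AddCommGroup (K.Homology q) :=
  inferInstanceAs (AddCommGroup ((K.cycles q) ⧸ (K.boundariesIn q)))

noncomputable instance (K : AbsSC α) (q : ℕ) : Module (ZMod 2) (K.Homology q) :=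
  inferInstanceAs (Module (ZMod 2) ((K.cycles q) ⧸ (K.boundariesIn q)))

/-- The homology class of a cycle. -/
noncomputable def hClass (K : AbsSC α) (q : ℕ) (c : K.Chain q) (hc : c ∈ K.cycles q) :
    K.Homology q :=
  Submodule.Quotient.mk ⟨c, hc⟩

/-- The chain map induced by an inclusion of simplicial complexes. -/
noncomputable def chainMap (K L : AbsSC α) (h : K.faces ⊆ L.faces) (q : ℕ) :
    K.Chain q →ₗ[ZMod 2] L.Chain q :=
  Finsupp.lmapDomain (ZMod 2) (ZMod 2) fun s : K.simplices q =>
    (⟨s.1, h s.2.1, s.2.2⟩ : L.simplices q)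

/-- `θ` is the map on `q`-th homology induced by the inclusion `K ⊆ L`: it sends the
class of every cycle `c` of `K` to the class of the image chain of `c` in `L`. -/
def InducedHom (K L : AbsSC α) (q : ℕ)
    (θ : K.Homology q →ₗ[ZMod 2] L.Homology q) : Prop :=
  ∃ h : K.faces ⊆ L.faces,
    ∀ (c : K.Chain q) (hc : c ∈ K.cycles q),
      ∃ hc' : chainMap K L h q c ∈ L.cycles q,
        θ (K.hClass q c hc) = L.hClass q (chainMap K L h q c) hc'

end AbsSC

/-- The faces of the gluing stars `S = S_1 ⊔ ⋯ ⊔ S_k`: for each `j`, the vertex `{z j}`,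
the vertices `{v}` for `v ∈ P j`, and the edges `{z j, v}` for `v ∈ P j`. -/
def starFaces {α : Type} [DecidableEq α] {k : ℕ} (P : Fin k → Set α) (z : Fin k → α) :
    Set (Finset α) :=
  {s | ∃ j : Fin k, s = {z j} ∨ ∃ v ∈ P j, s = {v} ∨ s = {z j, v}}

section Tower

variable {W : ℕ → Type} [∀ i, AddCommGroup (W i)] [∀ i, Module (ZMod 2) (W i)]

/-- The composite `φ_{i,j} = φ_{j-1} ∘ ⋯ ∘ φ_i` of the connecting maps of a tower
(the identity when `i = j`). -/
noncomputable def comps (φ : ∀ i, W i →ₗ[ZMod 2] W (i + 1)) {i j : ℕ} (h : i ≤ j) :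
    W i →ₗ[ZMod 2] W j :=
  Nat.leRecOn (C := fun m => W i →ₗ[ZMod 2] W m) h (fun {m} g => (φ m).comp g) LinearMap.id

/-- `s ∈ W b` has persistence interval `(b, d)` with finite death `d ∈ {b+1, …, n}`:
`s ∉ im φ_{b-1}`, `φ_{b,d'}(s) ∉ im φ_{b-1,d'}` for all `b ≤ d' < d`, and
`φ_{b,d}(s) ∈ im φ_{b-1,d}`. -/
def HasPersIntervalFin (φ : ∀ i, W i →ₗ[ZMod 2] W (i + 1)) (n b d : ℕ) (s : W b) : Prop :=
  ∃ (_ : 1 ≤ b) (hbd : b < d) (_ : d ≤ n),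
    s ∉ LinearMap.range (comps φ (Nat.sub_le b 1)) ∧
    (∀ (d' : ℕ) (hd' : b ≤ d'), d' < d →
      comps φ hd' s ∉ LinearMap.range (comps φ (Nat.le_trans (Nat.sub_le b 1) hd'))) ∧
    comps φ (Nat.le_of_lt hbd) s ∈
      LinearMap.range (comps φ (Nat.le_trans (Nat.sub_le b 1) (Nat.le_of_lt hbd)))

/-- `s ∈ W b` has persistence interval `(b, ∞)`: `s ∉ im φ_{b-1}` and
`φ_{b,d'}(s) ∉ im φ_{b-1,d'}` for all `b ≤ d' ≤ n`. -/
def HasPersIntervalInf (φ : ∀ i, W i →ₗ[ZMod 2] W (i + 1)) (n b : ℕ) (s : W b) : Prop :=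
  ∃ _ : 1 ≤ b,
    s ∉ LinearMap.range (comps φ (Nat.sub_le b 1)) ∧
    ∀ (d' : ℕ) (hd' : b ≤ d'), d' ≤ n →
      comps φ hd' s ∉ LinearMap.range (comps φ (Nat.le_trans (Nat.sub_le b 1) hd'))

end Tower

section Persistence

variable {W W' : ℕ → Type} [∀ i, AddCommGroup (W i)] [∀ i, Module (ZMod 2) (W i)]
  [∀ i, AddCommGroup (W' i)] [∀ i, Module (ZMod 2) (W' i)]
  {φ : ∀ i, W i →ₗ[ZMod 2] W (i + 1)} {ψ : ∀ i, W' i →ₗ[ZMod 2] W' (i + 1)}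

theorem comps_self {i : ℕ} (h : i ≤ i) : comps φ h = LinearMap.id := Nat.leRecOn_self _

theorem comps_succ {i j : ℕ} (h : i ≤ j) (h' : i ≤ j + 1) :
    comps φ h' = (φ j).comp (comps φ h) := Nat.leRecOn_succ h _

theorem comps_comps {i j l : ℕ} (hij : i ≤ j) (hjl : j ≤ l) (x : W i) :
    comps φ hjl (comps φ hij x) = comps φ (hij.trans hjl) x := by
  induction l, hjl using Nat.le_induction with
  | base => rw [comps_self]; rfl
  | succ l hjl ih =>
    rw [comps_succ hjl, comps_succ (hij.trans hjl), LinearMap.comp_apply, LinearMap.comp_apply, ih]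

theorem comps_naturality {n : ℕ} {θ : ∀ i, W i →ₗ[ZMod 2] W' i}
    (hsq : ∀ i, i < n → (θ (i + 1)).comp (φ i) = (ψ i).comp (θ i))
    {i j : ℕ} (hij : i ≤ j) (hjn : j ≤ n) (x : W i) :
    θ j (comps φ hij x) = comps ψ hij (θ i x) := by
  induction j, hij using Nat.le_induction with
  | base => rw [comps_self, comps_self]; rfl
  | succ j hij ih =>
    rw [comps_succ hij, comps_succ hij, LinearMap.comp_apply, LinearMap.comp_apply,
      ← ih (by omega), ← LinearMap.comp_apply, hsq j (by omega), LinearMap.comp_apply]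

theorem HasPersIntervalFin.of_map {n b d : ℕ} {θ : ∀ i, W i →ₗ[ZMod 2] W' i}
    (hsq : ∀ i, i < n → (θ (i + 1)).comp (φ i) = (ψ i).comp (θ i))
    {s : W b} {t : W' b} (hst : θ b s = t) (ht : HasPersIntervalFin ψ n b d t)
    (hbd : b ≤ d) (hdie : comps φ hbd s ∈ LinearMap.range (comps φ ((Nat.sub_le b 1).trans hbd))) :
    HasPersIntervalFin φ n b d s := by
  obtain ⟨hb, hbd', hdn, hborn, hlive, -⟩ := ht
  refine ⟨hb, hbd', hdn, ?_, ?_, hdie⟩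
  · rintro ⟨x, hx⟩
    exact hborn ⟨θ (b - 1) x, by rw [← comps_naturality hsq _ (by omega), hx, hst]⟩
  · rintro d' hbd' hd'd ⟨x, hx⟩
    exact hlive d' hbd' hd'd
      ⟨θ (b - 1) x, by
        rw [← comps_naturality hsq _ (by omega), hx, comps_naturality hsq _ (by omega), hst]⟩

theorem exists_preimage_comps_mem_range {n a b d : ℕ} {θ : ∀ i, W i →ₗ[ZMod 2] W' i}
    (hsq : ∀ i, i < n → (θ (i + 1)).comp (φ i) = (ψ i).comp (θ i))
    (hsurj : ∀ i, i ≤ n → Function.Surjective (θ i)) (hab : a ≤ b) (hbd : b ≤ d) (hdn : d ≤ n)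
    (hker : LinearMap.ker (θ d) ≤ (LinearMap.ker (θ a)).map (comps φ (hab.trans hbd)))
    {t : W' b} (ht : comps ψ hbd t ∈ LinearMap.range (comps ψ ((Nat.sub_le b 1).trans hbd))) :
    ∃ s, θ b s = t ∧ comps φ hbd s ∈ LinearMap.range (comps φ ((Nat.sub_le b 1).trans hbd)) := by
  obtain ⟨u, hu⟩ := ht
  obtain ⟨s, rfl⟩ := hsurj b (by omega) t
  obtain ⟨u, rfl⟩ := hsurj (b - 1) (by omega) u
  obtain ⟨g, hg, hgx⟩ := hker (x := comps φ hbd s - comps φ ((Nat.sub_le b 1).trans hbd) u) (by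
    rw [LinearMap.mem_ker, map_sub, comps_naturality hsq _ hdn, comps_naturality hsq _ hdn, hu,
      sub_self])
  refine ⟨s - comps φ hab g, ?_, u, ?_⟩
  · rw [map_sub, comps_naturality hsq _ (by omega), LinearMap.mem_ker.mp hg, map_zero, sub_zero]
  · rw [map_sub, comps_comps, hgx, sub_sub_cancel]

end Persistence

namespace AbsSC

variable {α : Type}

section Chains

variable {K L M : AbsSC α}

def simplexIncl (h : K.faces ⊆ L.faces) (q : ℕ) (σ : K.simplices q) : L.simplices q :=
  ⟨σ.1, h σ.2.1, σ.2.2⟩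

theorem chainMap_eq_lmapDomain (h : K.faces ⊆ L.faces) (q : ℕ) :
    chainMap K L h q = Finsupp.lmapDomain (ZMod 2) (ZMod 2) (simplexIncl h q) :=
  rfl

theorem chainMap_single (h : K.faces ⊆ L.faces) {q : ℕ} (σ : K.simplices q) (a : ZMod 2) :
    chainMap K L h q (Finsupp.single σ a) = Finsupp.single (simplexIncl h q σ) a :=
  Finsupp.mapDomain_single

theorem simplexIncl_injective (h : K.faces ⊆ L.faces) (q : ℕ) :
    Function.Injective (simplexIncl h q) := fun _ _ hστ =>
  Subtype.ext (congrArg (fun σ : L.simplices q => σ.1) hστ)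

theorem chainMap_injective (h : K.faces ⊆ L.faces) (q : ℕ) :
    Function.Injective (chainMap K L h q) :=
  Finsupp.mapDomain_injective (simplexIncl_injective h q)

theorem chainMap_self (h : K.faces ⊆ K.faces) (q : ℕ) (c : K.Chain q) :
    chainMap K K h q c = c :=
  Finsupp.mapDomain_id

theorem chainMap_chainMap (h₁ : K.faces ⊆ L.faces) (h₂ : L.faces ⊆ M.faces) (q : ℕ)
    (c : K.Chain q) :
    chainMap L M h₂ q (chainMap K L h₁ q c) = chainMap K M (h₁.trans h₂) q c :=
  Finsupp.mapDomain_comp.symm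

theorem mem_range_chainMap_iff (h : K.faces ⊆ L.faces) {q : ℕ} {c : L.Chain q} :
    c ∈ LinearMap.range (chainMap K L h q) ↔ ∀ σ ∈ c.support, σ.1 ∈ K.faces := by
  have hrange : Set.range (simplexIncl h q) = {σ | σ.1 ∈ K.faces} := by
    ext σ
    exact ⟨by rintro ⟨τ, rfl⟩; exact τ.2.1, fun hσ => ⟨⟨σ.1, hσ, σ.2.2⟩, rfl⟩⟩
  rw [chainMap_eq_lmapDomain, LinearMap.range_eq_map, ← Finsupp.supported_univ,
    Finsupp.lmapDomain_supported, Set.image_univ, hrange, Finsupp.mem_supported]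
  rfl

theorem boundary_single {q : ℕ} (s : K.simplices (q + 1)) (a : ZMod 2) :
    K.boundary q (Finsupp.single s a) = a • K.faceChain q s := by
  rw [boundary, Finsupp.lsum_single, LinearMap.toSpanSingleton_apply]

theorem faceChain_simplexIncl (h : K.faces ⊆ L.faces) {q : ℕ} (s : K.simplices (q + 1)) :
    L.faceChain q (simplexIncl h (q + 1) s) = chainMap K L h q (K.faceChain q s) := by
  simp only [faceChain, map_sum]
  exact Finset.sum_congr rfl fun t _ => (chainMap_single h ⟨t.1, _⟩ 1).symm

theorem boundary_chainMap (h : K.faces ⊆ L.faces) {q : ℕ} (e : K.Chain (q + 1)) :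
    L.boundary q (chainMap K L h (q + 1) e) = chainMap K L h q (K.boundary q e) := by
  induction e using Finsupp.induction_linear with
  | zero => simp only [map_zero]
  | add e e' he he' => simp only [map_add, he, he']
  | single s a =>
    rw [chainMap_single, boundary_single, boundary_single, map_smul, faceChain_simplexIncl]

end Chains

section Homology

variable {K L M : AbsSC α}

noncomputable def homologyClass₀ (K : AbsSC α) : K.Chain 0 →ₗ[ZMod 2] K.Homology 0 :=
  (K.boundariesIn 0).mkQ ∘ₗ LinearMap.codRestrict (K.cycles 0) LinearMap.id
    fun _ => Submodule.mem_top

theorem homologyClass₀_surjective (K : AbsSC α) : Function.Surjective K.homologyClass₀ := by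
  intro x
  obtain ⟨⟨c, hc⟩, rfl⟩ := Submodule.Quotient.mk_surjective _ x
  exact ⟨c, rfl⟩

theorem ker_homologyClass₀ (K : AbsSC α) :
    LinearMap.ker K.homologyClass₀ = LinearMap.range (K.boundary 0) := by
  ext c
  exact (Submodule.Quotient.mk_eq_zero _).trans Submodule.mem_comap

theorem homologyClass₀_eq_homologyClass₀_iff {c c' : K.Chain 0} :
    K.homologyClass₀ c = K.homologyClass₀ c' ↔ c - c' ∈ LinearMap.range (K.boundary 0) := by
  rw [← ker_homologyClass₀, LinearMap.sub_mem_ker_iff]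

theorem InducedHom.id (K : AbsSC α) (q : ℕ) : InducedHom K K q LinearMap.id :=
  ⟨subset_rfl, fun c hc => ⟨by rwa [chainMap_self], by simp only [chainMap_self]; rfl⟩⟩

theorem InducedHom.comp {q : ℕ} {θ : K.Homology q →ₗ[ZMod 2] L.Homology q}
    {θ' : L.Homology q →ₗ[ZMod 2] M.Homology q} (hθ : InducedHom K L q θ)
    (hθ' : InducedHom L M q θ') : InducedHom K M q (θ' ∘ₗ θ) := by
  obtain ⟨h, hθ⟩ := hθ
  obtain ⟨h', hθ'⟩ := hθ'
  refine ⟨h.trans h', fun c hc => ?_⟩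
  obtain ⟨hc₁, e₁⟩ := hθ c hc
  obtain ⟨hc₂, e₂⟩ := hθ' _ hc₁
  refine ⟨chainMap_chainMap h h' q c ▸ hc₂, ?_⟩
  rw [LinearMap.comp_apply, e₁, e₂]
  simp only [chainMap_chainMap]

theorem InducedHom.comps {n : ℕ} {K : ℕ → AbsSC α} {q : ℕ}
    {φ : ∀ i, (K i).Homology q →ₗ[ZMod 2] (K (i + 1)).Homology q}
    (hφ : ∀ i, i < n → InducedHom (K i) (K (i + 1)) q (φ i))
    {i j : ℕ} (hij : i ≤ j) (hjn : j ≤ n) : InducedHom (K i) (K j) q (comps φ hij) := by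
  induction j, hij using Nat.le_induction with
  | base => rw [comps_self]; exact InducedHom.id _ _
  | succ j hij ih => rw [comps_succ hij]; exact (ih (by omega)).comp (hφ j (by omega))

theorem InducedHom.apply_homologyClass₀ {θ : K.Homology 0 →ₗ[ZMod 2] L.Homology 0}
    (hθ : InducedHom K L 0 θ) (h : K.faces ⊆ L.faces) (c : K.Chain 0) :
    θ (K.homologyClass₀ c) = L.homologyClass₀ (chainMap K L h 0 c) :=
  (hθ.snd c Submodule.mem_top).snd

theorem subsingleton_homology_of_faces_eq_empty (hK : K.faces = ∅) (q : ℕ) :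
    Subsingleton (K.Homology q) := by
  have : IsEmpty (K.simplices q) := ⟨fun σ => Set.notMem_empty σ.1 (hK ▸ σ.2.1)⟩
  exact (Submodule.mkQ_surjective (K.boundariesIn q)).subsingleton

end Homology

section Vertices

variable {K : AbsSC α}

theorem mem_vertexSet_of_mem {s : Finset α} {v : α} (hs : s ∈ K.faces) (hv : v ∈ s) :
    v ∈ K.vertexSet :=
  K.down_closed hs (Finset.singleton_subset_iff.2 hv) (Finset.singleton_nonempty v)

def vertex (K : AbsSC α) {v : α} (hv : v ∈ K.vertexSet) : K.simplices 0 :=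
  ⟨{v}, hv, Finset.card_singleton v⟩

theorem exists_eq_vertex (σ : K.simplices 0) : ∃ v, ∃ hv : v ∈ K.vertexSet, σ = K.vertex hv := by
  obtain ⟨v, hv⟩ := Finset.card_eq_one.mp σ.2.2
  exact ⟨v, show {v} ∈ K.faces from hv ▸ σ.2.1, Subtype.ext hv⟩

theorem boundary_single_edge [DecidableEq α] {v w : α} (hvw : v ≠ w) (s : K.simplices 1)
    (hs : s.1 = {v, w}) (hv : v ∈ K.vertexSet) (hw : w ∈ K.vertexSet) :
    K.boundary 0 (Finsupp.single s 1) =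
      Finsupp.single (K.vertex hv) 1 + Finsupp.single (K.vertex hw) 1 := by
  classical
  let g : Finset α → K.Chain 0 := fun t =>
    if ht : t ∈ K.faces ∧ t.card = 0 + 1 then Finsupp.single ⟨t, ht⟩ 1 else 0
  have hface : K.faceChain 0 s = ∑ t ∈ (s.1.powersetCard (0 + 1)).attach, g t :=
    Finset.sum_congr rfl fun t _ => by
      obtain ⟨hsub, hcard⟩ := Finset.mem_powersetCard.1 t.2
      simp only [g]
      rw [dif_pos ⟨K.down_closed s.2.1 hsub (Finset.card_pos.1 (by omega)), hcard⟩]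
  rw [Finset.sum_attach, hs, Finset.powersetCard_one, Finset.sum_map, Finset.sum_pair hvw] at hface
  rw [boundary_single, one_smul, hface]
  simp only [g, Function.Embedding.coeFn_mk, Finset.card_singleton, and_true]
  rw [dif_pos (show {v} ∈ K.faces from hv), dif_pos (show {w} ∈ K.faces from hw)]
  rfl

theorem homologyClass₀_vertex_eq_of_edge [DecidableEq α] {v w : α} (he : {v, w} ∈ K.faces)
    (hv : v ∈ K.vertexSet) (hw : w ∈ K.vertexSet) :
    K.homologyClass₀ (Finsupp.single (K.vertex hv) 1) =
      K.homologyClass₀ (Finsupp.single (K.vertex hw) 1) := by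
  rcases eq_or_ne v w with rfl | hvw
  · rfl
  rw [homologyClass₀_eq_homologyClass₀_iff, ZModModule.sub_eq_add]
  exact ⟨_, boundary_single_edge hvw ⟨{v, w}, he, Finset.card_pair hvw⟩ rfl hv hw⟩

end Vertices

section Gluing

variable {K L : AbsSC α}

theorem InducedHom.surjective_of_exists_edge [DecidableEq α]
    {θ : K.Homology 0 →ₗ[ZMod 2] L.Homology 0} (hθ : InducedHom K L 0 θ)
    (hL : ∀ v ∈ L.vertexSet, v ∉ K.vertexSet → ∃ w ∈ K.vertexSet, {v, w} ∈ L.faces) :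
    Function.Surjective θ := by
  have hvertex : ∀ v (hv : v ∈ L.vertexSet),
      L.homologyClass₀ (Finsupp.single (L.vertex hv) 1) ∈ LinearMap.range θ := by
    intro v hv
    by_cases hvK : v ∈ K.vertexSet
    · exact ⟨_, (hθ.apply_homologyClass₀ hθ.fst (Finsupp.single (K.vertex hvK) 1)).trans
        (by rw [chainMap_single]; rfl)⟩
    · obtain ⟨w, hwK, hvw⟩ := hL v hv hvK
      rw [homologyClass₀_vertex_eq_of_edge hvw hv (hθ.fst hwK)]
      exact ⟨_, (hθ.apply_homologyClass₀ hθ.fst (Finsupp.single (K.vertex hwK) 1)).trans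
        (by rw [chainMap_single]; rfl)⟩
  rw [← LinearMap.range_eq_top, eq_top_iff]
  rintro x -
  obtain ⟨c, rfl⟩ := L.homologyClass₀_surjective x
  induction c using Finsupp.induction_linear with
  | zero => rw [map_zero]; exact zero_mem _
  | add c c' hc hc' => rw [map_add]; exact add_mem hc hc'
  | single σ a =>
    obtain ⟨v, hv, rfl⟩ := exists_eq_vertex σ
    rw [← Finsupp.smul_single_one, map_smul]
    exact Submodule.smul_mem _ a (hvertex v hv)

theorem InducedHom.exists_new_vertex_of_notMem_range
    {θ : K.Homology 0 →ₗ[ZMod 2] L.Homology 0} (hθ : InducedHom K L 0 θ) {c : L.Chain 0}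
    (hc : L.homologyClass₀ c ∉ LinearMap.range θ) :
    ∃ σ ∈ c.support, ∃ v ∈ σ.1, v ∈ L.vertexSet \ K.vertexSet := by
  by_contra! hold
  obtain ⟨c₀, rfl⟩ : c ∈ LinearMap.range (chainMap K L hθ.fst 0) := by
    rw [mem_range_chainMap_iff]
    intro σ hσ
    obtain ⟨v, hv, rfl⟩ := exists_eq_vertex σ
    by_contra hvK
    exact hold _ hσ v (Finset.mem_singleton_self v) ⟨hv, hvK⟩
  exact hc ⟨K.homologyClass₀ c₀, hθ.apply_homologyClass₀ _ c₀⟩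

end Gluing

section MayerVietoris

variable {A A' B B' : AbsSC α}

/-- Exactness of the Mayer–Vietoris sequence in degree `0` for `B' = B ∪ A'` with `B ∩ A' ⊆ A`. -/
theorem exists_chain_of_chainMap_mem_range_boundary (hAA' : A.faces ⊆ A'.faces)
    (hAB : A.faces ⊆ B.faces) (hA'B' : A'.faces ⊆ B'.faces) (hBB' : B.faces ⊆ B'.faces)
    (hunion : B'.faces ⊆ B.faces ∪ A'.faces) (hinter : B.faces ∩ A'.faces ⊆ A.faces)
    {c : B.Chain 0} (hc : chainMap B B' hBB' 0 c ∈ LinearMap.range (B'.boundary 0)) :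
    ∃ g : A.Chain 0, chainMap A A' hAA' 0 g ∈ LinearMap.range (A'.boundary 0) ∧
      c - chainMap A B hAB 0 g ∈ LinearMap.range (B.boundary 0) := by
  classical
  obtain ⟨E, hE⟩ := hc
  obtain ⟨EB, hEB⟩ :
      E.filter (fun σ => σ.1 ∈ B.faces) ∈ LinearMap.range (chainMap B B' hBB' 1) := by
    rw [mem_range_chainMap_iff]
    intro σ hσ
    rw [Finsupp.support_filter, Finset.mem_filter] at hσ
    exact hσ.2
  obtain ⟨EA, hEA⟩ :
      E.filter (fun σ => σ.1 ∉ B.faces) ∈ LinearMap.range (chainMap A' B' hA'B' 1) := by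
    rw [mem_range_chainMap_iff]
    intro σ hσ
    rw [Finsupp.support_filter, Finset.mem_filter] at hσ
    exact (hunion σ.2.1).resolve_left hσ.2
  have hsplit : chainMap B B' hBB' 1 EB + chainMap A' B' hA'B' 1 EA = E := by
    rw [hEB, hEA]
    exact Finsupp.filter_add_filter_not E _
  have hw : chainMap A' B' hA'B' 0 (A'.boundary 0 EA) =
      chainMap B B' hBB' 0 (c - B.boundary 0 EB) := by
    rw [map_sub, ← hE, ← hsplit, map_add, boundary_chainMap, boundary_chainMap,
      add_sub_cancel_left]
  obtain ⟨g, hg⟩ : A'.boundary 0 EA ∈ LinearMap.range (chainMap A A' hAA' 0) := by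
    have hwB := (mem_range_chainMap_iff hBB').1 ⟨_, hw.symm⟩
    rw [chainMap_eq_lmapDomain, Finsupp.lmapDomain_apply,
      Finsupp.mapDomain_support_of_injective (simplexIncl_injective hA'B' 0)] at hwB
    rw [mem_range_chainMap_iff]
    exact fun σ hσ => hinter ⟨hwB _ (Finset.mem_image_of_mem _ hσ), σ.2.1⟩
  have hgB : chainMap A B hAB 0 g = c - B.boundary 0 EB := by
    apply chainMap_injective hBB' 0
    rw [← hw, ← hg, chainMap_chainMap, chainMap_chainMap]
  exact ⟨g, ⟨EA, hg.symm⟩, EB, by rw [hgB, sub_sub_cancel]⟩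

theorem InducedHom.ker_le_map_ker {θA : A.Homology 0 →ₗ[ZMod 2] A'.Homology 0}
    {θB : B.Homology 0 →ₗ[ZMod 2] B'.Homology 0} {φ : A.Homology 0 →ₗ[ZMod 2] B.Homology 0}
    (hθA : InducedHom A A' 0 θA) (hθB : InducedHom B B' 0 θB) (hφ : InducedHom A B 0 φ)
    (hA'B' : A'.faces ⊆ B'.faces) (hunion : B'.faces ⊆ B.faces ∪ A'.faces)
    (hinter : B.faces ∩ A'.faces ⊆ A.faces) :
    LinearMap.ker θB ≤ (LinearMap.ker θA).map φ := by
  intro x hx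
  obtain ⟨c, rfl⟩ := B.homologyClass₀_surjective x
  rw [LinearMap.mem_ker, hθB.apply_homologyClass₀ hθB.fst, ← LinearMap.mem_ker,
    ker_homologyClass₀] at hx
  obtain ⟨g, hgA', hgB⟩ := exists_chain_of_chainMap_mem_range_boundary hθA.fst hφ.fst hA'B'
    hθB.fst hunion hinter hx
  refine ⟨A.homologyClass₀ g, ?_, ?_⟩
  · rw [SetLike.mem_coe, LinearMap.mem_ker, hθA.apply_homologyClass₀ hθA.fst, ← LinearMap.mem_ker,
      ker_homologyClass₀]
    exact hgA'
  · rw [hφ.apply_homologyClass₀ hφ.fst, eq_comm, homologyClass₀_eq_homologyClass₀_iff]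
    exact hgB

end MayerVietoris

section Star

variable [DecidableEq α] {k : ℕ} {P : Fin k → Set α} {z : Fin k → α}

theorem mem_starFaces_singleton {v : α} (hv : {v} ∈ starFaces P z) :
    (∃ j, z j = v) ∨ ∃ j, v ∈ P j := by
  obtain ⟨j, hj | ⟨w, hw, hj | hj⟩⟩ := hv
  · exact .inl ⟨j, (Finset.singleton_injective hj).symm⟩
  · exact .inr ⟨j, Finset.singleton_injective hj ▸ hw⟩
  · exact .inl ⟨j, (Finset.mem_singleton.1 (hj ▸ Finset.mem_insert_self (z j) {w}))⟩

theorem inter_starFaces_subset {A B : AbsSC α} (hP : ∀ j, P j ⊆ A.vertexSet)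
    (hz : ∀ j, z j ∉ B.vertexSet) : B.faces ∩ starFaces P z ⊆ A.faces := by
  rintro s ⟨hsB, j, rfl | ⟨v, hv, rfl | rfl⟩⟩
  · exact absurd hsB (hz j)
  · exact hP j hv
  · exact absurd (mem_vertexSet_of_mem hsB (Finset.mem_insert_self (z j) {v})) (hz j)

variable {K L : AbsSC α}

theorem InducedHom.surjective_of_faces_eq_union_starFaces
    {θ : K.Homology 0 →ₗ[ZMod 2] L.Homology 0} (hθ : InducedHom K L 0 θ)
    (hL : L.faces = K.faces ∪ starFaces P z) (hPne : ∀ j, (P j).Nonempty)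
    (hP : ∀ j, P j ⊆ K.vertexSet) : Function.Surjective θ := by
  refine hθ.surjective_of_exists_edge fun v hv hvK => ?_
  have hvS : {v} ∈ starFaces P z :=
    (show {v} ∈ K.faces ∪ starFaces P z from hL ▸ hv).resolve_left hvK
  obtain ⟨j, rfl⟩ | ⟨j, hvP⟩ := mem_starFaces_singleton hvS
  · obtain ⟨w, hw⟩ := hPne j
    exact ⟨w, hP j hw, hL ▸ .inr ⟨j, .inr ⟨w, hw, .inr rfl⟩⟩⟩
  · exact absurd (hP j hvP) hvK

theorem InducedHom.ker_le_map_ker_of_starFaces {A A' B B' : AbsSC α}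
    {θA : A.Homology 0 →ₗ[ZMod 2] A'.Homology 0} {θB : B.Homology 0 →ₗ[ZMod 2] B'.Homology 0}
    {φ : A.Homology 0 →ₗ[ZMod 2] B.Homology 0} (hθA : InducedHom A A' 0 θA)
    (hθB : InducedHom B B' 0 θB) (hφ : InducedHom A B 0 φ)
    (hA' : A'.faces = A.faces ∪ starFaces P z) (hB' : B'.faces = B.faces ∪ starFaces P z)
    (hP : ∀ j, P j ⊆ A.vertexSet) (hz : ∀ j, z j ∉ B.vertexSet) :
    LinearMap.ker θB ≤ (LinearMap.ker θA).map φ := by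
  refine hθA.ker_le_map_ker hθB hφ ?_ ?_ ?_
  · rw [hA', hB']
    exact Set.union_subset_union_left _ hφ.fst
  · rw [hB', hA']
    exact Set.union_subset_union_right _ Set.subset_union_right
  · rw [hA', Set.inter_union_distrib_left]
    exact Set.union_subset Set.inter_subset_right (inter_starFaces_subset hP hz)

end Star

end AbsSC

open AbsSC

theorem stmt10_general {α : Type} [DecidableEq α] (n k : ℕ)
    (K Kt : ℕ → AbsSC α)
    (hKt0 : (Kt 0).faces = ∅)
    (P : Fin k → Set α)
    (hPne : ∀ j, (P j).Nonempty)
    (hPunion : (⋃ j, P j) = (K 1).vertexSet)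
    (z : Fin k → α)
    (hznew : ∀ (j : Fin k) (i : ℕ), i ≤ n → z j ∉ (K i).vertexSet)
    (hKt : ∀ i, 1 ≤ i → i ≤ n → (Kt i).faces = (K i).faces ∪ starFaces P z)
    (φ : ∀ i : ℕ, (K i).Homology 0 →ₗ[ZMod 2] (K (i + 1)).Homology 0)
    (ψ : ∀ i : ℕ, (Kt i).Homology 0 →ₗ[ZMod 2] (Kt (i + 1)).Homology 0)
    (θ : ∀ i : ℕ, (K i).Homology 0 →ₗ[ZMod 2] (Kt i).Homology 0)
    (hφ : ∀ i, i < n → AbsSC.InducedHom (K i) (K (i + 1)) 0 (φ i))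
    (hθ : ∀ i, i ≤ n → AbsSC.InducedHom (K i) (Kt i) 0 (θ i))
    (hsq : ∀ i, i < n → (θ (i + 1)).comp (φ i) = (ψ i).comp (θ i))
    (b d : ℕ)
    (t : (Kt b).Homology 0)
    (ht : HasPersIntervalFin ψ n b d t) :
    ∃ (c : (K b).Chain 0) (hc : c ∈ (K b).cycles 0),
      (∃ σ ∈ c.support, ∃ v ∈ σ.1, v ∈ (K b).vertexSet \ (K (b - 1)).vertexSet) ∧
      (∃ (hsub : (K b).faces ⊆ (Kt b).faces)
          (hc' : AbsSC.chainMap (K b) (Kt b) hsub 0 c ∈ (Kt b).cycles 0),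
        t = (Kt b).hClass 0 (AbsSC.chainMap (K b) (Kt b) hsub 0 c) hc') ∧
      θ b ((K b).hClass 0 c hc) = t ∧
      HasPersIntervalFin φ n b d ((K b).hClass 0 c hc) := by
  obtain ⟨hb, hbd, hdn, -, -, hdie⟩ := id ht
  have hP : ∀ i, 1 ≤ i → i ≤ n → ∀ j, P j ⊆ (K i).vertexSet := fun i hi hin j =>
    (hPunion ▸ Set.subset_iUnion P j).trans fun _ hv => (InducedHom.comps hφ hi hin).fst hv
  have hsurj : ∀ i, i ≤ n → Function.Surjective (θ i) := by
    rintro (_ | i) hi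
    · have := subsingleton_homology_of_faces_eq_empty hKt0 0
      exact fun _ => ⟨0, Subsingleton.elim _ _⟩
    · exact (hθ _ hi).surjective_of_faces_eq_union_starFaces (hKt _ (by omega) hi) hPne
        (hP _ (by omega) hi)
  have hker : LinearMap.ker (θ d) ≤ (LinearMap.ker (θ 1)).map (comps φ (hb.trans hbd.le)) :=
    (hθ 1 (by omega)).ker_le_map_ker_of_starFaces (hθ d hdn) (InducedHom.comps hφ _ hdn)
      (hKt 1 le_rfl (by omega)) (hKt d (by omega) hdn) (hP 1 le_rfl (by omega))
      fun j => hznew j d hdn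
  obtain ⟨s, hst, hsdie⟩ := exists_preimage_comps_mem_range hsq hsurj hb hbd.le hdn hker hdie
  have hs : HasPersIntervalFin φ n b d s := ht.of_map hsq hst hbd.le hsdie
  obtain ⟨c, rfl⟩ := (K b).homologyClass₀_surjective s
  obtain ⟨hsub, hθb⟩ := hθ b (by omega)
  obtain ⟨hc', hθc⟩ := hθb c Submodule.mem_top
  exact ⟨c, Submodule.mem_top,
    (InducedHom.comps hφ (Nat.sub_le b 1) (by omega)).exists_new_vertex_of_notMem_range
      hs.2.2.2.1, ⟨hsub, hc', hst ▸ hθc⟩, hst, hs⟩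

/-- if `t ∈ H_0(K̃_b)` has persistence interval `(b, d)` with `d ≤ n`
finite, then there is a `0`-chain `c` of vertices of `K_b`, at least one of which lies
in `V_b ∖ V_{b-1}`, such that `t` is the class of `c` in `H_0(K̃_b)`, and the class
`s = ⟨c⟩ ∈ H_0(K_b)` satisfies `θ_{0,b}(s) = t` and has persistence interval `(b, d)`
in `H_0(K_•)`. -/
theorem stmt10 {α : Type} [DecidableEq α] (n k : ℕ)
    (K Kt : ℕ → AbsSC α)
    (hK0 : (K 0).faces = ∅)
    (hKt0 : (Kt 0).faces = ∅)
    (hKmono : ∀ i, i < n → (K i).faces ⊆ (K (i + 1)).faces)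
    (hKtmono : ∀ i, i < n → (Kt i).faces ⊆ (Kt (i + 1)).faces)
    (P : Fin k → Set α)
    (hPne : ∀ j, (P j).Nonempty)
    (hPdisj : Pairwise (Function.onFun Disjoint P))
    (hPunion : (⋃ j, P j) = (K 1).vertexSet)
    (z : Fin k → α)
    (hzinj : Function.Injective z)
    (hznew : ∀ (j : Fin k) (i : ℕ), i ≤ n → z j ∉ (K i).vertexSet)
    (hKt : ∀ i, 1 ≤ i → i ≤ n → (Kt i).faces = (K i).faces ∪ starFaces P z)
    (φ : ∀ i : ℕ, (K i).Homology 0 →ₗ[ZMod 2] (K (i + 1)).Homology 0)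
    (ψ : ∀ i : ℕ, (Kt i).Homology 0 →ₗ[ZMod 2] (Kt (i + 1)).Homology 0)
    (θ : ∀ i : ℕ, (K i).Homology 0 →ₗ[ZMod 2] (Kt i).Homology 0)
    (hφ : ∀ i, i < n → AbsSC.InducedHom (K i) (K (i + 1)) 0 (φ i))
    (hψ : ∀ i, i < n → AbsSC.InducedHom (Kt i) (Kt (i + 1)) 0 (ψ i))
    (hθ : ∀ i, i ≤ n → AbsSC.InducedHom (K i) (Kt i) 0 (θ i))
    (hsq : ∀ i, i < n → (θ (i + 1)).comp (φ i) = (ψ i).comp (θ i))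
    (b d : ℕ)
    (t : (Kt b).Homology 0)
    (ht : HasPersIntervalFin ψ n b d t) :
    ∃ (c : (K b).Chain 0) (hc : c ∈ (K b).cycles 0),
      (∃ σ ∈ c.support, ∃ v ∈ σ.1, v ∈ (K b).vertexSet \ (K (b - 1)).vertexSet) ∧
      (∃ (hsub : (K b).faces ⊆ (Kt b).faces)
          (hc' : AbsSC.chainMap (K b) (Kt b) hsub 0 c ∈ (Kt b).cycles 0),
        t = (Kt b).hClass 0 (AbsSC.chainMap (K b) (Kt b) hsub 0 c) hc') ∧
      θ b ((K b).hClass 0 c hc) = t ∧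
      HasPersIntervalFin φ n b d ((K b).hClass 0 c hc) :=
  stmt10_general n k K Kt hKt0 P hPne hPunion z hznew hKt φ ψ θ hφ hθ hsq b d t ht
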